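/- For every natural number p, Tr[B_p^4] = 2·Tr[A_p^4] + 8·Tr[A_p^3·A_p^T] + 4·Tr[A_p^2·(A_p^T)^2] + 2·Tr[A_p·A_p^T·A_p·A_p^T], where B_p = A_p + A_p^T. Consequently Tr[B_p^4] = 2·2^p + 8·5^p + 4·x_p + 2·y_p with x_p = Tr[A_p^2·(A_p^T)^2] and y_p = Tr[A_p·A_p^T·A_p·A_p^T]. -/

import Mathlib

open Matrix

/-- Index type for the recursively defined block matrices `A p`,
of cardinality `2 ^ p`. -/
def IdxA : ℕ → Type
  | 0 => Fin 1
  | p + 1 => IdxA p ⊕ IdxA p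

instance instFintypeIdxA : ∀ p, Fintype (IdxA p)
  | 0 => inferInstanceAs (Fintype (Fin 1))
  | p + 1 => letI := instFintypeIdxA p; inferInstanceAs (Fintype (IdxA p ⊕ IdxA p))

instance instDecidableEqIdxA : ∀ p, DecidableEq (IdxA p)
  | 0 => inferInstanceAs (DecidableEq (Fin 1))
  | p + 1 => letI := instDecidableEqIdxA p; inferInstanceAs (DecidableEq (IdxA p ⊕ IdxA p))

/-- `A 0` is the 1×1 matrix with single entry 1, and
`A (p+1) = [[A p, (A p)ᵀ], [0, A p]]` as a 2×2 block matrix. -/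
def A : (p : ℕ) → Matrix (IdxA p) (IdxA p) ℤ
  | 0 => Matrix.of fun _ _ => (1 : ℤ)
  | p + 1 => Matrix.fromBlocks (A p) (A p)ᵀ 0 (A p)

/-- The symmetrized transfer matrix `B p = A p + (A p)ᵀ`. -/
def B (p : ℕ) : Matrix (IdxA p) (IdxA p) ℤ := A p + (A p)ᵀ

/-- `x p = Tr[(A p)² ((A p)ᵀ)²]`. -/
def xSeq (p : ℕ) : ℤ := Matrix.trace ((A p) ^ 2 * ((A p)ᵀ) ^ 2)

/-- `y p = Tr[A p (A p)ᵀ A p (A p)ᵀ]`. -/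
def ySeq (p : ℕ) : ℤ := Matrix.trace (A p * (A p)ᵀ * A p * (A p)ᵀ)

/-!
Expanding `(A + Aᵀ)⁴` gives sixteen words in `A` and `Aᵀ`. The trace is invariant under
cyclic rotation of a word and under reversing it while swapping `A ↔ Aᵀ` (transposition), and
these symmetries sort the sixteen words into the classes of `A⁴`, `A³Aᵀ`, `A²Aᵀ²` and
`AAᵀAAᵀ`, of sizes 2, 8, 4 and 2.

For the closed forms, `A (p+1)` is upper block triangular with both diagonal blocks `A p`, so
`tr A(p+1)⁴ = 2 tr A(p)⁴`. In `A(p+1)³ A(p+1)ᵀ` the off-diagonal block `A pᵀ` contributes three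
more cyclic rotations of `A(p)³ A(p)ᵀ` besides the two diagonal ones, whence the factor 5.
-/

namespace Matrix

variable {n m R : Type*} [Fintype n] [Fintype m]

theorem trace_fromBlocks [AddCommMonoid R] (a : Matrix n n R) (b : Matrix n m R)
    (c : Matrix m n R) (d : Matrix m m R) :
    trace (fromBlocks a b c d) = trace a + trace d := by
  simp [trace, Fintype.sum_sum_type]

theorem trace_mul_cycle₄ [CommSemiring R] (w x y z : Matrix n n R) :
    trace (w * x * y * z) = trace (x * y * z * w) := by
  rw [Matrix.mul_assoc w, Matrix.mul_assoc w, trace_mul_comm, Matrix.mul_assoc x]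

theorem trace_mul₄_eq_trace_transpose [CommSemiring R] (w x y z : Matrix n n R) :
    trace (w * x * y * z) = trace (zᵀ * yᵀ * xᵀ * wᵀ) := by
  rw [← trace_transpose]
  simp only [transpose_mul, Matrix.mul_assoc]

variable [DecidableEq n] [DecidableEq m]

theorem trace_fromBlocks_zero₂₁_pow [Semiring R] (a : Matrix n n R) (b : Matrix n m R)
    (d : Matrix m m R) (k : ℕ) :
    trace (fromBlocks a b 0 d ^ k) = trace (a ^ k) + trace (d ^ k) := by
  suffices ∃ c, fromBlocks a b 0 d ^ k = fromBlocks (a ^ k) c 0 (d ^ k) by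
    obtain ⟨c, hc⟩ := this
    rw [hc, trace_fromBlocks]
  induction k with
  | zero => exact ⟨0, by rw [pow_zero, pow_zero, pow_zero, fromBlocks_one]⟩
  | succ k ih =>
    obtain ⟨c, hc⟩ := ih
    refine ⟨a ^ k * b + c * d, ?_⟩
    rw [pow_succ, hc, fromBlocks_multiply]
    simp [pow_succ]

variable [CommRing R]

theorem trace_add_transpose_pow_four (a : Matrix n n R) :
    trace ((a + aᵀ) ^ 4) = 2 * trace (a ^ 4) + 8 * trace (a ^ 3 * aᵀ)
      + 4 * trace (a ^ 2 * aᵀ ^ 2) + 2 * trace (a * aᵀ * a * aᵀ) := by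
  simp only [pow_succ, pow_zero, Matrix.one_mul, Matrix.add_mul, Matrix.mul_add, trace_add,
    ← Matrix.mul_assoc]
  have hrev := trace_mul₄_eq_trace_transpose a a a aᵀ
  rw [transpose_transpose] at hrev
  -- chains of rotations within each cyclic class; `hrev` and the last term pair a class with its
  -- transpose
  linear_combination trace_mul_cycle₄ a a aᵀ a + 2 * trace_mul_cycle₄ a aᵀ a a
    + 3 * trace_mul_cycle₄ aᵀ a a a - 4 * hrev + trace_mul_cycle₄ aᵀ aᵀ aᵀ a
    + 2 * trace_mul_cycle₄ aᵀ aᵀ a aᵀ + 3 * trace_mul_cycle₄ aᵀ a aᵀ aᵀ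
    + trace_mul_cycle₄ a aᵀ aᵀ a + 2 * trace_mul_cycle₄ aᵀ aᵀ a a
    + 3 * trace_mul_cycle₄ aᵀ a a aᵀ + trace_mul_cycle₄ aᵀ a aᵀ a
    - trace_mul₄_eq_trace_transpose a a a a

theorem trace_fromBlocks_pow_three_mul_transpose (a : Matrix n n R) :
    trace (fromBlocks a aᵀ 0 a ^ 3 * (fromBlocks a aᵀ 0 a)ᵀ) = 5 * trace (a ^ 3 * aᵀ) := by
  simp only [pow_succ, pow_zero, Matrix.one_mul, fromBlocks_transpose, fromBlocks_multiply,
    transpose_zero, transpose_transpose, Matrix.mul_zero, Matrix.zero_mul, add_zero, zero_add,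
    trace_fromBlocks, Matrix.add_mul, trace_add]
  linear_combination trace_mul_cycle₄ a a aᵀ a + 2 * trace_mul_cycle₄ a aᵀ a a
    + 3 * trace_mul_cycle₄ aᵀ a a a

end Matrix

theorem A_zero : A 0 = 1 := by
  ext i j
  rw [Subsingleton.elim (α := Fin 1) i j, one_apply_eq]
  rfl

theorem trace_A_pow_four (p : ℕ) : trace (A p ^ 4) = 2 ^ p := by
  induction p with
  | zero => rw [A_zero, one_pow, trace_one]; rfl
  | succ p ih =>
    have h : trace (A (p + 1) ^ 4) = trace (A p ^ 4) + trace (A p ^ 4) :=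
      trace_fromBlocks_zero₂₁_pow (A p) (A p)ᵀ (A p) 4
    rw [h, ih, pow_succ]
    ring

theorem trace_A_pow_three_mul_transpose (p : ℕ) : trace (A p ^ 3 * (A p)ᵀ) = 5 ^ p := by
  induction p with
  | zero => rw [A_zero, one_pow, transpose_one, Matrix.mul_one, trace_one]; rfl
  | succ p ih =>
    have h : trace (A (p + 1) ^ 3 * (A (p + 1))ᵀ) = 5 * trace (A p ^ 3 * (A p)ᵀ) :=
      trace_fromBlocks_pow_three_mul_transpose (A p)
    rw [h, ih, pow_succ, mul_comm]

theorem trace_B_fourth (p : ℕ) :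
    Matrix.trace ((B p) ^ 4) =
        2 * Matrix.trace ((A p) ^ 4) + 8 * Matrix.trace ((A p) ^ 3 * (A p)ᵀ)
          + 4 * Matrix.trace ((A p) ^ 2 * ((A p)ᵀ) ^ 2)
          + 2 * Matrix.trace (A p * (A p)ᵀ * A p * (A p)ᵀ) ∧
    Matrix.trace ((B p) ^ 4) = 2 * 2 ^ p + 8 * 5 ^ p + 4 * xSeq p + 2 * ySeq p := by
  have h := trace_add_transpose_pow_four (A p)
  refine ⟨h, ?_⟩
  rw [B, h, trace_A_pow_four, trace_A_pow_three_mul_transpose, xSeq, ySeq]
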